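/- Let n, e, k be nonnegative integers with k(k+1) ≤ e ≤ (k+1)² and n ≥ 2k+2. Set α = (k+1)² − e and β = (k+1) − α. Then the code consisting of n − 2k − 2 zeros followed by any word with α copies of a = 01 and β copies of b = 10 (the final digit of the word being the rightmost digit of the code) encodes a threshold graph on n vertices with exactly e edges. -/

import Mathlib

/-!
Common definitions: threshold graphs from binary codes, counts of matchings and
independent sets, lex and colex graphs, and almost alternating codes.

A binary code is a `List Bool` whose head is the *leftmost* (most significant,
last added) digit; `true` stands for the digit `1` and `false` for `0`.
Reading the code from right to left, each digit adds a vertex: a `1` adds a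
dominating vertex and a `0` adds an isolated vertex.  Equivalently, the vertex
at position `i` (from the left) is adjacent to every vertex to its right iff
its digit is `1`.  Note that the value of the rightmost digit (the star) never
affects the graph.
-/

/-- The threshold graph encoded by a binary code `σ`. -/
def threshOf (σ : List Bool) : SimpleGraph (Fin σ.length) where
  Adj i j := i ≠ j ∧ σ.get (min i j) = true
  symm := by
    constructor
    intro i j h
    refine ⟨h.1.symm, ?_⟩
    rw [min_comm]
    exact h.2
  loopless := by
    constructor
    intro i h
    exact h.1 rfl

/-- The number of edges of a graph. -/
noncomputable def edgeCount {V : Type*} (G : SimpleGraph V) : ℕ := Nat.card G.edgeSet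

/-- `M` is a matching of `G`: a set of pairwise disjoint edges of `G`. -/
def IsMatchingSet {V : Type*} (G : SimpleGraph V) (M : Finset (Sym2 V)) : Prop :=
  (∀ e ∈ M, e ∈ G.edgeSet) ∧ ∀ e ∈ M, ∀ f ∈ M, e ≠ f → ∀ v : V, v ∈ e → v ∉ f

/-- `m(G)`: the total number of matchings of `G` (including the empty matching). -/
noncomputable def matchCount {V : Type*} (G : SimpleGraph V) : ℕ :=
  Nat.card {M : Finset (Sym2 V) // IsMatchingSet G M}

/-- `m_k(G)`: the number of matchings of `G` of size `k`. -/
noncomputable def matchCountK {V : Type*} (G : SimpleGraph V) (k : ℕ) : ℕ :=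
  Nat.card {M : Finset (Sym2 V) // IsMatchingSet G M ∧ M.card = k}

/-- `i(G)`: the number of independent sets of `G` (including the empty set). -/
noncomputable def indCount {V : Type*} (G : SimpleGraph V) : ℕ :=
  Nat.card {S : Finset V // ∀ u ∈ S, ∀ v ∈ S, ¬ G.Adj u v}

/-- `i_k(G)`: the number of independent sets of `G` of size `k`. -/
noncomputable def indCountK {V : Type*} (G : SimpleGraph V) (k : ℕ) : ℕ :=
  Nat.card {S : Finset V // (∀ u ∈ S, ∀ v ∈ S, ¬ G.Adj u v) ∧ S.card = k}

/-- Two codes encode the same threshold graph: they have the same length and agree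
except possibly in the rightmost (starred) digit. -/
def CodeEquiv (σ τ : List Bool) : Prop := σ.length = τ.length ∧ σ.dropLast = τ.dropLast

/-- Words that are concatenations of copies of the letters `a = 01` and `b = 10`. -/
inductive IsABWord : List Bool → Prop
  | nil : IsABWord []
  | a {w : List Bool} : IsABWord w → IsABWord (false :: true :: w)
  | b {w : List Bool} : IsABWord w → IsABWord (true :: false :: w)

/-- `w` is a concatenation of `α` copies of the letter `a = 01` and `β` copies of the
letter `b = 10`, in some order. -/
def IsABWordWith (α β : ℕ) (w : List Bool) : Prop :=
  ∃ ls : List (List Bool), (∀ x ∈ ls, x = [false, true] ∨ x = [true, false]) ∧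
    ls.count [false, true] = α ∧ ls.count [true, false] = β ∧ w = ls.flatten

/-- A code is almost alternating if (possibly after reinterpreting the starred rightmost
digit) it is an initial constant block followed by a word in the letters `a = 01` and
`b = 10`, either using the rightmost digit as the final digit of the last letter
(unstarred case) or keeping the rightmost digit separate after the word (starred case). -/
def IsAlmostAltCode (σ : List Bool) : Prop :=
  ∃ τ : List Bool, CodeEquiv σ τ ∧
    ∃ (t : ℕ) (c : Bool) (w : List Bool), IsABWord w ∧
      (τ = List.replicate t c ++ w ∨ ∃ d : Bool, τ = List.replicate t c ++ w ++ [d])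

/-- A small almost alternating code: the initial block consists of `0`'s (or is empty). -/
def IsSmallAACode (σ : List Bool) : Prop :=
  ∃ τ : List Bool, CodeEquiv σ τ ∧
    ∃ (t : ℕ) (w : List Bool), IsABWord w ∧
      (τ = List.replicate t false ++ w ∨ ∃ d : Bool, τ = List.replicate t false ++ w ++ [d])

/-- A large almost alternating code: the initial block is a nonempty block of `1`'s. -/
def IsLargeAACode (σ : List Bool) : Prop :=
  ∃ τ : List Bool, CodeEquiv σ τ ∧
    ∃ (t : ℕ) (w : List Bool), 1 ≤ t ∧ IsABWord w ∧
      (τ = List.replicate t true ++ w ∨ ∃ d : Bool, τ = List.replicate t true ++ w ++ [d])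

/-- A code has a bracketed string if (possibly after reinterpreting the starred rightmost
digit) it contains a substring `1 0^j 1` or `0 1^j 0` with `j ≥ 3`. -/
def HasBracketedString (σ : List Bool) : Prop :=
  ∃ τ : List Bool, CodeEquiv σ τ ∧ ∃ (x y : List Bool) (j : ℕ), 3 ≤ j ∧
    (τ = x ++ [true] ++ List.replicate j false ++ [true] ++ y ∨
     τ = x ++ [false] ++ List.replicate j true ++ [false] ++ y)

/-- A code has a separation issue if it contains two pairs of repeated digits separated by
a substring of odd length, where the first pair is immediately preceded by the opposite
digit and the second pair is followed by at least one further digit. -/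
def HasSeparationIssue (σ : List Bool) : Prop :=
  ∃ (x m y : List Bool) (d c : Bool),
    Odd m.length ∧ y ≠ [] ∧ σ = x ++ [!d, d, d] ++ m ++ [c, c] ++ y

/-- The colex graph `C(n,e)`: the graph on `Fin n` whose edges are the first `e` pairs in
the colexicographic order.  The pair `{i, j}` with `i < j` has rank `j(j-1)/2 + i` in
this order. -/
def colexGraph (n e : ℕ) : SimpleGraph (Fin n) where
  Adj i j := i ≠ j ∧ max i.val j.val * (max i.val j.val - 1) / 2 + min i.val j.val < e
  symm := by
    constructor
    intro i j h
    refine ⟨h.1.symm, ?_⟩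
    rw [max_comm j.val i.val, min_comm j.val i.val]
    exact h.2
  loopless := by
    constructor
    intro i h
    exact h.1 rfl

/-- The lex graph `L(n,e)`: the graph on `Fin n` whose edges are the first `e` pairs in
the lexicographic order.  The pair `{i, j}` with `i < j` has rank
`i(n-1) - i(i-1)/2 + (j - i - 1)` in this order. -/
def lexGraph (n e : ℕ) : SimpleGraph (Fin n) where
  Adj i j := i ≠ j ∧
    min i.val j.val * (n - 1) - min i.val j.val * (min i.val j.val - 1) / 2
      + (max i.val j.val - min i.val j.val - 1) < e
  symm := by
    constructor
    intro i j h
    refine ⟨h.1.symm, ?_⟩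
    rw [max_comm j.val i.val, min_comm j.val i.val]
    exact h.2
  loopless := by
    constructor
    intro i h
    exact h.1 rfl

/-!
The edge count of `T(σ)` is the sum, over the digits `1` of `σ`, of the number of digits to
their right. Leading zeros contribute nothing. In a word of `m` letters `01` and `10` every
letter has exactly one `1`, so each pair of letters contributes two edges and each letter
`10` one more edge inside itself: `2 * m.choose 2 + β` edges. For `m = α + β = k + 1` this is
`k(k+1) + (k+1) - α = e`.
-/

open Finset

def edgeWeight : List Bool → ℕ
  | [] => 0
  | d :: σ => (if d then σ.length else 0) + edgeWeight σ

def threshOfEdgeSetEquiv (σ : List Bool) :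
    (threshOf σ).edgeSet ≃ {p : Fin σ.length × Fin σ.length // p.1 < p.2 ∧ σ[p.1] = true} :=
  (Sym2.sortEquiv.subtypeEquiv (q := fun p => (threshOf σ).Adj p.1.1 p.1.2) fun z => by
      conv_lhs => rw [← Sym2.sortEquiv.symm_apply_apply z]
      rfl).trans <|
    (Equiv.subtypeSubtypeEquivSubtypeInter (fun p : Fin σ.length × Fin σ.length => p.1 ≤ p.2)
      fun p => (threshOf σ).Adj p.1 p.2).trans <|
      Equiv.subtypeEquivRight fun p => by
        simp only [threshOf, List.get_eq_getElem, lt_iff_le_and_ne]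
        constructor
        · rintro ⟨hle, hne, h⟩
          exact ⟨⟨hle, hne⟩, by rwa [min_eq_left hle] at h⟩
        · rintro ⟨⟨hle, hne⟩, h⟩
          exact ⟨hle, hne, by rwa [min_eq_left hle]⟩

theorem edgeCount_threshOf_eq_sum (σ : List Bool) :
    edgeCount (threshOf σ) = ∑ i : Fin σ.length, if σ[i] then σ.length - 1 - i else 0 := by
  classical
  rw [edgeCount, Nat.card_congr (threshOfEdgeSetEquiv σ), Nat.card_eq_fintype_card,
    Fintype.card_subtype, card_filter, Fintype.sum_prod_type]
  refine sum_congr rfl fun i _ => ?_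
  by_cases h : σ[i] = true
  · simp [h, filter_lt_eq_Ioi, Fin.card_Ioi]
  · simp [h]

theorem sum_getElem_eq_edgeWeight (σ : List Bool) :
    (∑ i : Fin σ.length, if σ[i] then σ.length - 1 - i else 0) = edgeWeight σ := by
  induction σ with
  | nil => rfl
  | cons d σ ih =>
    refine (Fin.sum_univ_succ (n := σ.length) _).trans ?_
    rw [edgeWeight, ← ih]
    congr 1
    simp [Nat.sub_sub, Nat.add_comm]

theorem edgeCount_threshOf (σ : List Bool) : edgeCount (threshOf σ) = edgeWeight σ := by
  rw [edgeCount_threshOf_eq_sum, sum_getElem_eq_edgeWeight]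

theorem edgeWeight_replicate_false_append (t : ℕ) (w : List Bool) :
    edgeWeight (List.replicate t false ++ w) = edgeWeight w := by
  induction t with
  | zero => rfl
  | succ t ih => simpa [List.replicate_succ, edgeWeight] using ih

namespace IsABWordWith

@[elab_as_elim]
theorem induction {motive : ℕ → ℕ → List Bool → Prop} (nil : motive 0 0 [])
    (a : ∀ α β w, IsABWordWith α β w → motive α β w → motive (α + 1) β (false :: true :: w))
    (b : ∀ α β w, IsABWordWith α β w → motive α β w → motive α (β + 1) (true :: false :: w))
    {α β : ℕ} {w : List Bool} (h : IsABWordWith α β w) : motive α β w := by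
  obtain ⟨ls, hls, rfl, rfl, rfl⟩ := h
  induction ls with
  | nil => exact nil
  | cons x ls ih =>
    have hls' : ∀ y ∈ ls, y = [false, true] ∨ y = [true, false] :=
      fun y hy => hls y (List.mem_cons_of_mem _ hy)
    obtain rfl | rfl := hls x List.mem_cons_self
    · simpa [List.count_cons] using a _ _ _ ⟨ls, hls', rfl, rfl, rfl⟩ (ih hls')
    · simpa [List.count_cons] using b _ _ _ ⟨ls, hls', rfl, rfl, rfl⟩ (ih hls')

variable {α β : ℕ} {w : List Bool}

theorem length_eq (h : IsABWordWith α β w) : w.length = 2 * (α + β) := by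
  refine h.induction rfl (fun α β w _ ih => ?_) (fun α β w _ ih => ?_) <;>
    simp only [List.length_cons, ih] <;> ring

theorem edgeWeight_eq (h : IsABWordWith α β w) :
    edgeWeight w = 2 * (α + β).choose 2 + β := by
  have choose_two_succ (m : ℕ) : (m + 1).choose 2 = m.choose 2 + m := by
    simpa [add_comm] using Nat.choose_succ_succ' m 1
  refine h.induction rfl (fun α β w hw ih => ?_) (fun α β w hw ih => ?_)
  · simp only [edgeWeight, Bool.false_eq_true, ↓reduceIte, ih, hw.length_eq]
    rw [add_right_comm α 1, choose_two_succ]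
    ring
  · simp only [edgeWeight, Bool.false_eq_true, ↓reduceIte, List.length_cons, ih, hw.length_eq]
    rw [← add_assoc α β 1, choose_two_succ]
    ring

end IsABWordWith

/-- If `k(k+1) ≤ e ≤ (k+1)²` and `n ≥ 2k+2`, then with
`α = (k+1)² − e` and `β = (k+1) − α`, the code made of `n − 2k − 2` zeros followed by
any word with `α` copies of `a = 01` and `β` copies of `b = 10` (the final digit of the
word being the rightmost digit of the code) encodes a threshold graph on `n` vertices
with exactly `e` edges. -/
theorem unstarred_code_realizes (n e k : ℕ) (h1 : k * (k + 1) ≤ e) (h2 : e ≤ (k + 1) ^ 2)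
    (h3 : 2 * k + 2 ≤ n) (w : List Bool)
    (hw : IsABWordWith ((k + 1) ^ 2 - e) ((k + 1) - ((k + 1) ^ 2 - e)) w) :
    (List.replicate (n - 2 * k - 2) false ++ w).length = n ∧
      edgeCount (threshOf (List.replicate (n - 2 * k - 2) false ++ w)) = e := by
  have hsq : (k + 1) ^ 2 = k * (k + 1) + (k + 1) := by ring
  have hletters : (k + 1) ^ 2 - e + ((k + 1) - ((k + 1) ^ 2 - e)) = k + 1 := by omega
  have hpairs : 2 * (k + 1).choose 2 = k * (k + 1) := by
    simpa [mul_comm] using (Nat.add_one_mul_choose_eq k 1).symm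
  constructor
  · rw [List.length_append, List.length_replicate, hw.length_eq, hletters]
    omega
  · rw [edgeCount_threshOf, edgeWeight_replicate_false_append, hw.edgeWeight_eq, hletters, hpairs]
    omega
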